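/- Let H be a finite TTSP graph with source s and target t such that s and t are non-adjacent in H. If H admits an L-shape drawing or a rectangular drawing, then the graph obtained from H by adding the edge st admits a proper square-contact representation. -/

import Mathlib

/-!
In a rectangular drawing every internal square lies to the right of the line `x = right S(t)`
and above the line `y = top S(s)`. Grow `S(t)` towards the bottom left, keeping its top-right
corner, until its bottom reaches `y = top S(s)`; then grow `S(s)` the same way until its left
side is aligned with the new `S(t)`. The two new squares share a segment of that line, stay in
the region left of or below the internal squares, and contain the old ones, so old contacts
survive. No contact is created either: an internal square touching the line `x = right S(t)`
(resp. `y = top S(s)`) already touches `S(t)` (resp. `S(s)`) by definition of a rectangular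
drawing.
-/

open Set

structure AxSquare where
  x : ℝ
  y : ℝ
  side : ℝ
  side_pos : 0 < side

namespace AxSquare
def left (S : AxSquare) : ℝ := S.x
def right (S : AxSquare) : ℝ := S.x + S.side
def bottom (S : AxSquare) : ℝ := S.y
def top (S : AxSquare) : ℝ := S.y + S.side
/-- The square as a subset of the plane. -/
def toSet (S : AxSquare) : Set (ℝ × ℝ) :=
  Set.Icc S.x (S.x + S.side) ×ˢ Set.Icc S.y (S.y + S.side)
end AxSquare

/-- A proper square-contact representation of `G`, restricted to the vertex set `A`. -/
def IsSCROn {V : Type} (G : SimpleGraph V) (A : Set V) (Sq : V → AxSquare) : Prop :=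
  (∀ u ∈ A, ∀ v ∈ A, u ≠ v → interior (Sq u).toSet ∩ interior (Sq v).toSet = ∅) ∧
  (∀ u ∈ A, ∀ v ∈ A, G.Adj u v → ((Sq u).toSet ∩ (Sq v).toSet).Infinite) ∧
  (∀ u ∈ A, ∀ v ∈ A, u ≠ v → ¬ G.Adj u v → (Sq u).toSet ∩ (Sq v).toSet = ∅)

/-- `G` admits a proper square-contact representation. -/
def HasSCR {V : Type} (G : SimpleGraph V) : Prop :=
  ∃ Sq : V → AxSquare, IsSCROn G Set.univ Sq

/-! ### SPQ-trees of two-terminal series-parallel graphs -/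

mutual
/-- A (canonical) SPQ decomposition tree over the vertex type `V`.  Each node stores
its source and its target. -/
inductive SPQ (V : Type) : Type where
  | Q : V → V → SPQ V
  | S : V → V → SPQList V → SPQ V
  | P : V → V → SPQList V → SPQ V
inductive SPQList (V : Type) : Type where
  | nil : SPQList V
  | cons : SPQ V → SPQList V → SPQList V
end

namespace SPQList
def toList {V : Type} : SPQList V → List (SPQ V)
  | .nil => []
  | .cons c cs => c :: cs.toList
end SPQList

namespace SPQ

def src {V : Type} : SPQ V → V
  | .Q s _ => s
  | .S s _ _ => s
  | .P s _ _ => s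

def tgt {V : Type} : SPQ V → V
  | .Q _ t => t
  | .S _ t _ => t
  | .P _ t _ => t

def isQ {V : Type} : SPQ V → Prop
  | .Q _ _ => True
  | _ => False

def isS {V : Type} : SPQ V → Prop
  | .S _ _ _ => True
  | _ => False

def isP {V : Type} : SPQ V → Prop
  | .P _ _ _ => True
  | _ => False

def children {V : Type} : SPQ V → List (SPQ V)
  | .Q _ _ => []
  | .S _ _ cs => cs.toList
  | .P _ _ cs => cs.toList

end SPQ

mutual
/-- The vertex set of the pertinent graph of an SPQ node. -/
def SPQ.vertSet {V : Type} : SPQ V → Set V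
  | .Q s t => {s, t}
  | .S s t cs => {s, t} ∪ SPQList.vertSetL cs
  | .P s t cs => {s, t} ∪ SPQList.vertSetL cs
def SPQList.vertSetL {V : Type} : SPQList V → Set V
  | .nil => ∅
  | .cons c cs => SPQ.vertSet c ∪ SPQList.vertSetL cs
end

mutual
/-- The (one-directional) adjacency of the pertinent graph of an SPQ node. -/
def SPQ.adjRel {V : Type} : SPQ V → V → V → Prop
  | .Q s t, u, v => u = s ∧ v = t
  | .S _ _ cs, u, v => SPQList.adjRelL cs u v
  | .P _ _ cs, u, v => SPQList.adjRelL cs u v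
def SPQList.adjRelL {V : Type} : SPQList V → V → V → Prop
  | .nil, _, _ => False
  | .cons c cs, u, v => SPQ.adjRel c u v ∨ SPQList.adjRelL cs u v
end

/-- The pertinent graph `G_μ` of an SPQ node `μ`, as a simple graph on the ambient
vertex type (vertices outside `μ.vertSet` are isolated). -/
def SPQ.pertinentGraph {V : Type} (μ : SPQ V) : SimpleGraph V where
  Adj u v := u ≠ v ∧ (μ.adjRel u v ∨ μ.adjRel v u)
  symm := ⟨fun _ _ h => ⟨h.1.symm, h.2.symm⟩⟩
  loopless := ⟨fun _ h => h.1 rfl⟩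

/-- The pertinent graph of `μ` contains the edge between the two terminals of `μ`. -/
def SPQ.hasTermEdge {V : Type} (μ : SPQ V) : Prop :=
  μ.pertinentGraph.Adj μ.src μ.tgt

/-- `chainFrom t s l`: the list `l` of SPQ nodes forms a series chain from the
terminal `t` to the terminal `s` (the node listed first is incident to `t`). -/
def SPQ.chainFrom {V : Type} (t s : V) : List (SPQ V) → Prop
  | [] => False
  | [c] => SPQ.tgt c = t ∧ SPQ.src c = s
  | c :: c' :: rest => SPQ.tgt c = t ∧ SPQ.chainFrom (SPQ.src c) s (c' :: rest)

/-- Vertex sets of the members of a series chain meet only in the shared terminals of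
consecutive members. -/
def SPQ.seriesPairwise {V : Type} (l : List (SPQ V)) : Prop :=
  ∀ i j : Fin l.length, (i : ℕ) < (j : ℕ) →
    (l.get i).vertSet ∩ (l.get j).vertSet ⊆
      (if (j : ℕ) = (i : ℕ) + 1 then {(l.get i).src} else (∅ : Set V))

mutual
/-- Well-formedness of an SPQ tree: it encodes a genuine (canonical) SPQ
decomposition of a two-terminal series-parallel graph. -/
def SPQ.WF {V : Type} : SPQ V → Prop
  | .Q s t => s ≠ t
  | .S s t cs =>
      s ≠ t ∧ 2 ≤ cs.toList.length ∧ SPQList.WFL cs ∧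
      (∀ c ∈ cs.toList, SPQ.isP c ∨ SPQ.isQ c) ∧
      SPQ.chainFrom t s cs.toList ∧ SPQ.seriesPairwise cs.toList
  | .P s t cs =>
      s ≠ t ∧ 2 ≤ cs.toList.length ∧ SPQList.WFL cs ∧
      (∀ c ∈ cs.toList, SPQ.isS c ∨ SPQ.isQ c) ∧
      (∀ c ∈ cs.toList, SPQ.src c = s ∧ SPQ.tgt c = t) ∧
      (∀ i j : Fin cs.toList.length, (i : ℕ) < (j : ℕ) →
        (cs.toList.get i).vertSet ∩ (cs.toList.get j).vertSet ⊆ ({s, t} : Set V)) ∧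
      (∀ i j : Fin cs.toList.length,
        SPQ.isQ (cs.toList.get i) → SPQ.isQ (cs.toList.get j) → i = j)
def SPQList.WFL {V : Type} : SPQList V → Prop
  | .nil => True
  | .cons c cs => SPQ.WF c ∧ SPQList.WFL cs
end

mutual
/-- `ν` is a node of the SPQ tree rooted at the given node. -/
def SPQ.MemTree {V : Type} (ν : SPQ V) : SPQ V → Prop
  | .Q s t => ν = .Q s t
  | .S s t cs => ν = .S s t cs ∨ SPQList.MemTreeL ν cs
  | .P s t cs => ν = .P s t cs ∨ SPQList.MemTreeL ν cs
def SPQList.MemTreeL {V : Type} (ν : SPQ V) : SPQList V → Prop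
  | .nil => False
  | .cons c cs => SPQ.MemTree ν c ∨ SPQList.MemTreeL ν cs
end

/-- At most two entries of `l` satisfy `Pr`. -/
def AtMostTwoOn {α : Type} (Pr : α → Prop) (l : List α) : Prop :=
  ∀ i j k : Fin l.length, Pr (l.get i) → Pr (l.get j) → Pr (l.get k) →
    i = j ∨ i = k ∨ j = k

/-- Exactly two entries of `l` satisfy `Pr`. -/
def ExactlyTwoOn {α : Type} (Pr : α → Prop) (l : List α) : Prop :=
  ∃ i j : Fin l.length, i ≠ j ∧ Pr (l.get i) ∧ Pr (l.get j) ∧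
    ∀ k : Fin l.length, Pr (l.get k) → k = i ∨ k = j

/-- Exactly one entry of `l` satisfies `Pr`. -/
def ExactlyOneOn {α : Type} (Pr : α → Prop) (l : List α) : Prop :=
  ∃ i : Fin l.length, Pr (l.get i) ∧ ∀ k : Fin l.length, Pr (l.get k) → k = i

namespace SPQ

/-- A critical S-node: it has exactly two children and both children's pertinent
graphs contain the edge between their own terminals. -/
def IsCriticalS {V : Type} (μ : SPQ V) : Prop :=
  μ.isS ∧ μ.children.length = 2 ∧ ∀ c ∈ μ.children, SPQ.hasTermEdge c

/-- A bad P-node: its pertinent graph contains the edge between its terminals and it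
has exactly two critical S-node children. -/
def IsBadP {V : Type} (μ : SPQ V) : Prop :=
  μ.isP ∧ μ.hasTermEdge ∧ ExactlyTwoOn SPQ.IsCriticalS μ.children

/-- An almost-bad P-node: its pertinent graph contains the edge between its terminals
and it has exactly one critical S-node child. -/
def IsAlmostBadP {V : Type} (μ : SPQ V) : Prop :=
  μ.isP ∧ μ.hasTermEdge ∧ ExactlyOneOn SPQ.IsCriticalS μ.children

/-- A forbidden P-node: its pertinent graph contains the edge between its terminals
and it has more than two critical S-node children. -/
def IsForbiddenP {V : Type} (μ : SPQ V) : Prop :=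
  μ.isP ∧ μ.hasTermEdge ∧ ¬ AtMostTwoOn SPQ.IsCriticalS μ.children

/-- A good P-node: one that is neither almost bad, nor bad, nor forbidden. -/
def IsGoodP {V : Type} (μ : SPQ V) : Prop :=
  μ.isP ∧ ¬ μ.IsAlmostBadP ∧ ¬ μ.IsBadP ∧ ¬ μ.IsForbiddenP

/-- Type A S-node. -/
def IsTypeA {V : Type} (μ : SPQ V) : Prop :=
  μ.isS ∧ (2 < μ.children.length ∨
    (μ.children.length = 2 ∧ ∃ c ∈ μ.children, ¬ SPQ.hasTermEdge c))

/-- Type B S-node. -/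
def IsTypeB {V : Type} (μ : SPQ V) : Prop :=
  μ.isS ∧ μ.children.length = 2 ∧ (∀ c ∈ μ.children, SPQ.hasTermEdge c) ∧
    ∃ c ∈ μ.children, SPQ.IsBadP c

/-- Type C S-node. -/
def IsTypeC {V : Type} (μ : SPQ V) : Prop :=
  μ.isS ∧ μ.children.length = 2 ∧ (∀ c ∈ μ.children, SPQ.hasTermEdge c) ∧
    ∀ c ∈ μ.children, ¬ SPQ.IsBadP c

end SPQ

/-- The series-parallel graph obtained from the two-terminal series-parallel graph of
the SPQ tree `τ` by adding the reference edge between its terminals. -/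
def spGraph {V : Type} (τ : SPQ V) : SimpleGraph V :=
  τ.pertinentGraph ⊔ SimpleGraph.fromEdgeSet {s(τ.src, τ.tgt)}

/-- `H` is a two-terminal series-parallel graph with vertex set `A`, source `s` and
target `t`: it is the pertinent graph of some well-formed SPQ tree. -/
def IsTTSPWith {V : Type} (H : SimpleGraph V) (A : Set V) (s t : V) : Prop :=
  ∃ μ : SPQ V, SPQ.WF μ ∧ μ.src = s ∧ μ.tgt = t ∧ μ.vertSet = A ∧ μ.pertinentGraph = H

/-! ### Drawings -/

/-- Two squares have a pair of collinear sides and lie on opposite sides of the line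
through those sides. -/
def SepCollinear (A B : AxSquare) : Prop :=
  A.right = B.left ∨ B.right = A.left ∨ A.top = B.bottom ∨ B.top = A.bottom

/-- Property (*): for every internal vertex `v`, if `S(v)` has a side collinear with a
side of `S(s)` (resp. `S(t)`) and the two squares lie on opposite sides of the line
through that side, then `v` is adjacent to `s` (resp. `t`). -/
def PropertyStar {V : Type} (G : SimpleGraph V) (A : Set V) (s t : V)
    (Sq : V → AxSquare) : Prop :=
  ∀ v ∈ A \ ({s, t} : Set V),
    (SepCollinear (Sq v) (Sq s) → G.Adj v s) ∧
    (SepCollinear (Sq v) (Sq t) → G.Adj v t)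

/-- H0 drawing. -/
def IsH0Drawing {V : Type} (G : SimpleGraph V) (A : Set V) (s t : V)
    (Sq : V → AxSquare) : Prop :=
  IsSCROn G A Sq ∧ PropertyStar G A s t Sq ∧
  (Sq t).right ≤ (Sq s).left ∧
  (Sq s).bottom < (Sq t).bottom ∧
  ∀ v ∈ A \ ({s, t} : Set V),
    (Sq t).right ≤ (Sq v).left ∧ (Sq v).top ≤ (Sq t).top ∧
    (Sq s).bottom ≤ (Sq v).bottom ∧ (Sq v).right ≤ (Sq s).right

/-- V0 drawing. -/
def IsV0Drawing {V : Type} (G : SimpleGraph V) (A : Set V) (s t : V)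
    (Sq : V → AxSquare) : Prop :=
  IsSCROn G A Sq ∧ PropertyStar G A s t Sq ∧
  (Sq s).top ≤ (Sq t).bottom ∧
  (Sq t).left < (Sq s).left ∧
  ∀ v ∈ A \ ({s, t} : Set V),
    (Sq s).top ≤ (Sq v).bottom ∧ (Sq s).left ≤ (Sq v).left ∧
    (Sq v).top ≤ (Sq t).top ∧ (Sq v).right ≤ (Sq s).right

/-- H1 drawing. -/
def IsH1Drawing {V : Type} (G : SimpleGraph V) (A : Set V) (s t : V)
    (Sq : V → AxSquare) : Prop :=
  IsSCROn G A Sq ∧ PropertyStar G A s t Sq ∧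
  (Sq t).right ≤ (Sq s).left ∧
  (Sq t).bottom < (Sq s).bottom ∧
  ∀ v ∈ A \ ({s, t} : Set V),
    (Sq t).right ≤ (Sq v).left ∧ (Sq v).top ≤ (Sq t).top ∧
    (Sq t).bottom ≤ (Sq v).bottom ∧ (Sq v).right ≤ (Sq s).right

/-- H1◊ drawing. -/
def IsH1DiamondDrawing {V : Type} (G : SimpleGraph V) (A : Set V) (s t : V)
    (Sq : V → AxSquare) : Prop :=
  IsSCROn G A Sq ∧ PropertyStar G A s t Sq ∧
  (Sq t).right ≤ (Sq s).left ∧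
  (Sq s).bottom < (Sq t).bottom ∧
  ∀ v ∈ A \ ({s, t} : Set V),
    (Sq t).right ≤ (Sq v).left ∧ (Sq v).top ≤ (Sq t).top ∧
    (Sq s).top ≤ (Sq v).bottom ∧ (Sq v).right ≤ (Sq s).right

/-- V1 drawing. -/
def IsV1Drawing {V : Type} (G : SimpleGraph V) (A : Set V) (s t : V)
    (Sq : V → AxSquare) : Prop :=
  IsSCROn G A Sq ∧ PropertyStar G A s t Sq ∧
  (Sq s).top ≤ (Sq t).bottom ∧
  ∀ v ∈ A \ ({s, t} : Set V),
    (Sq s).top ≤ (Sq v).bottom ∧ (Sq v).top ≤ (Sq t).top ∧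
    (Sq s).left ≤ (Sq v).left ∧ (Sq v).right ≤ (Sq s).right

/-- D1 drawing. -/
def IsD1Drawing {V : Type} (G : SimpleGraph V) (A : Set V) (s t : V)
    (Sq : V → AxSquare) : Prop :=
  IsSCROn G A Sq ∧ PropertyStar G A s t Sq ∧
  (Sq s).top ≤ (Sq t).bottom ∧
  (Sq t).left < (Sq s).left ∧
  ∀ v ∈ A \ ({s, t} : Set V),
    (Sq t).left ≤ (Sq v).left ∧ (Sq v).top ≤ (Sq t).top ∧
    (Sq s).bottom ≤ (Sq v).bottom ∧ (Sq v).right ≤ (Sq s).right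

/-- D1◊ drawing: a D1 drawing in which all internal squares lie to the right of `S(t)`. -/
def IsD1DiamondDrawing {V : Type} (G : SimpleGraph V) (A : Set V) (s t : V)
    (Sq : V → AxSquare) : Prop :=
  IsD1Drawing G A s t Sq ∧
  ∀ v ∈ A \ ({s, t} : Set V), (Sq t).right ≤ (Sq v).left

/-- Rectangular drawing. -/
def IsRectangularDrawing {V : Type} (G : SimpleGraph V) (A : Set V) (s t : V)
    (Sq : V → AxSquare) : Prop :=
  IsSCROn G A Sq ∧
  (Sq t).right ≤ (Sq s).left ∧ (Sq s).top ≤ (Sq t).bottom ∧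
  (∀ v ∈ A \ ({s, t} : Set V),
    (Sq t).right ≤ (Sq v).left ∧ (Sq s).top ≤ (Sq v).bottom) ∧
  (∀ v ∈ A \ ({s, t} : Set V),
    (Sq v).left = (Sq t).right → ((Sq v).toSet ∩ (Sq t).toSet).Infinite) ∧
  (∀ v ∈ A \ ({s, t} : Set V),
    (Sq v).bottom = (Sq s).top → ((Sq v).toSet ∩ (Sq s).toSet).Infinite)

/-- L-shape drawing: a rectangular drawing with an empty axis-aligned rectangle inside
the bounding box of the internal squares, whose lower-left corner is at the
intersection of the line through the right side of `S(t)` and the line through the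
top side of `S(s)`. -/
def IsLShapeDrawing {V : Type} (G : SimpleGraph V) (A : Set V) (s t : V)
    (Sq : V → AxSquare) : Prop :=
  IsRectangularDrawing G A s t Sq ∧
  ∃ X Y : ℝ, (Sq t).right < X ∧ (Sq s).top < Y ∧
    (∃ v ∈ A \ ({s, t} : Set V), X ≤ (Sq v).right) ∧
    (∃ v ∈ A \ ({s, t} : Set V), Y ≤ (Sq v).top) ∧
    ∀ v ∈ A \ ({s, t} : Set V),
      (Set.Ioo (Sq t).right X ×ˢ Set.Ioo (Sq s).top Y) ∩ (Sq v).toSet = ∅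

/-- Pipe drawing. -/
def IsPipeDrawing {V : Type} (G : SimpleGraph V) (A : Set V) (s t : V)
    (Sq : V → AxSquare) : Prop :=
  IsSCROn G A Sq ∧
  (Sq t).right ≤ (Sq s).left ∧
  (∀ v ∈ A \ ({s, t} : Set V),
    (Sq t).right ≤ (Sq v).left ∧ (Sq v).right ≤ (Sq s).left) ∧
  (∀ v ∈ A \ ({s, t} : Set V),
    (Sq v).left = (Sq t).right → ((Sq v).toSet ∩ (Sq t).toSet).Infinite) ∧
  (∀ v ∈ A \ ({s, t} : Set V),
    (Sq v).right = (Sq s).left → ((Sq v).toSet ∩ (Sq s).toSet).Infinite)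

namespace AxSquare

theorem toSet_eq (S : AxSquare) :
    S.toSet = Icc S.left S.right ×ˢ Icc S.bottom S.top := rfl

theorem mem_toSet {S : AxSquare} {p : ℝ × ℝ} :
    p ∈ S.toSet ↔ (S.left ≤ p.1 ∧ p.1 ≤ S.right) ∧ S.bottom ≤ p.2 ∧ p.2 ≤ S.top := Iff.rfl

theorem left_lt_right (S : AxSquare) : S.left < S.right :=
  lt_add_of_pos_right _ S.side_pos

theorem bottom_lt_top (S : AxSquare) : S.bottom < S.top :=
  lt_add_of_pos_right _ S.side_pos

theorem interior_toSet (S : AxSquare) :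
    interior S.toSet = Ioo S.left S.right ×ˢ Ioo S.bottom S.top := by
  rw [toSet_eq, interior_prod_eq, interior_Icc, interior_Icc]

theorem toSet_subset_toSet {S T : AxSquare} (hl : T.left ≤ S.left) (hr : S.right ≤ T.right)
    (hb : T.bottom ≤ S.bottom) (ht : S.top ≤ T.top) : S.toSet ⊆ T.toSet :=
  prod_mono (Icc_subset_Icc hl hr) (Icc_subset_Icc hb ht)

theorem interior_inter_eq_empty_of_right_le {S T : AxSquare} (h : S.right ≤ T.left) :
    interior S.toSet ∩ interior T.toSet = ∅ := by
  refine eq_empty_of_forall_notMem fun p ⟨hS, hT⟩ => ?_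
  rw [interior_toSet] at hS hT
  linarith [hS.1.2, hT.1.1]

theorem interior_inter_eq_empty_of_top_le {S T : AxSquare} (h : S.top ≤ T.bottom) :
    interior S.toSet ∩ interior T.toSet = ∅ := by
  refine eq_empty_of_forall_notMem fun p ⟨hS, hT⟩ => ?_
  rw [interior_toSet] at hS hT
  linarith [hS.2.2, hT.2.1]

theorem inter_eq_empty_of_right_lt {S T : AxSquare} (h : S.right < T.left) :
    S.toSet ∩ T.toSet = ∅ :=
  eq_empty_of_forall_notMem fun _ ⟨hS, hT⟩ => by
    linarith [(mem_toSet.1 hS).1.2, (mem_toSet.1 hT).1.1]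

theorem inter_eq_empty_of_top_lt {S T : AxSquare} (h : S.top < T.bottom) :
    S.toSet ∩ T.toSet = ∅ :=
  eq_empty_of_forall_notMem fun _ ⟨hS, hT⟩ => by
    linarith [(mem_toSet.1 hS).2.2, (mem_toSet.1 hT).2.1]

theorem inter_infinite_of_top_eq_bottom {S T : AxSquare} (h : S.top = T.bottom)
    (hl : S.left < T.right) (hr : T.left < S.right) : (S.toSet ∩ T.toSet).Infinite := by
  have hseg : (Icc (max S.left T.left) (min S.right T.right) ×ˢ {S.top}).Infinite :=
    (Icc_infinite (max_lt_iff.2 ⟨lt_min S.left_lt_right hl, lt_min hr T.left_lt_right⟩)).prod_left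
      (singleton_nonempty _)
  refine hseg.mono ?_
  rintro p ⟨hx, hy⟩
  rw [mem_singleton_iff] at hy
  simp only [mem_Icc, max_le_iff, le_min_iff] at hx
  rw [mem_inter_iff, mem_toSet, mem_toSet]
  refine ⟨⟨⟨hx.1.1, hx.2.1⟩, ?_, ?_⟩, ⟨hx.1.2, hx.2.2⟩, ?_, ?_⟩ <;>
    linarith [S.bottom_lt_top, T.bottom_lt_top]

def growBottomLeft (S : AxSquare) (d : ℝ) (hd : 0 ≤ d) : AxSquare :=
  ⟨S.x - d, S.y - d, S.side + d, add_pos_of_pos_of_nonneg S.side_pos hd⟩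

section growBottomLeft

variable (S : AxSquare) {d : ℝ} (hd : 0 ≤ d)

@[simp] theorem left_growBottomLeft : (S.growBottomLeft d hd).left = S.left - d := rfl

@[simp] theorem bottom_growBottomLeft : (S.growBottomLeft d hd).bottom = S.bottom - d := rfl

@[simp] theorem right_growBottomLeft : (S.growBottomLeft d hd).right = S.right := by
  simp only [right, growBottomLeft]; ring

@[simp] theorem top_growBottomLeft : (S.growBottomLeft d hd).top = S.top := by
  simp only [top, growBottomLeft]; ring

theorem toSet_subset_growBottomLeft : S.toSet ⊆ (S.growBottomLeft d hd).toSet :=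
  toSet_subset_toSet (by simpa using hd) (by simp) (by simpa using hd) (by simp)

end growBottomLeft

end AxSquare

section IsSCRPair

variable {V : Type} {G : SimpleGraph V} {u v : V} {S S' T : AxSquare}

def IsSCRPair (G : SimpleGraph V) (u v : V) (S T : AxSquare) : Prop :=
  (u ≠ v → interior S.toSet ∩ interior T.toSet = ∅) ∧
  (G.Adj u v → (S.toSet ∩ T.toSet).Infinite) ∧
  (u ≠ v → ¬ G.Adj u v → S.toSet ∩ T.toSet = ∅)

theorem isSCROn_iff_forall_isSCRPair {A : Set V} {Sq : V → AxSquare} :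
    IsSCROn G A Sq ↔ ∀ u ∈ A, ∀ v ∈ A, IsSCRPair G u v (Sq u) (Sq v) :=
  ⟨fun h u hu v hv => ⟨h.1 u hu v hv, h.2.1 u hu v hv, h.2.2 u hu v hv⟩,
    fun h => ⟨fun u hu v hv => (h u hu v hv).1, fun u hu v hv => (h u hu v hv).2.1,
      fun u hu v hv => (h u hu v hv).2.2⟩⟩

theorem isSCRPair_self (G : SimpleGraph V) (v : V) (S T : AxSquare) : IsSCRPair G v v S T :=
  ⟨fun h => (h rfl).elim, fun h => (G.loopless.irrefl v h).elim, fun h => (h rfl).elim⟩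

theorem IsSCRPair.symm (h : IsSCRPair G u v S T) : IsSCRPair G v u T S := by
  refine ⟨fun hne => ?_, fun hadj => ?_, fun hne hna => ?_⟩
  · rw [inter_comm]; exact h.1 hne.symm
  · rw [inter_comm]; exact h.2.1 hadj.symm
  · rw [inter_comm]; exact h.2.2 hne.symm fun hadj => hna hadj.symm

theorem IsSCRPair.of_adj_iff {G' : SimpleGraph V} (h : IsSCRPair G u v S T)
    (hG : G'.Adj u v ↔ G.Adj u v) : IsSCRPair G' u v S T :=
  ⟨h.1, fun hadj => h.2.1 (hG.1 hadj), fun hne hna => h.2.2 hne (mt hG.2 hna)⟩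

theorem IsSCRPair.of_subset (h : IsSCRPair G u v S T) (hsub : S.toSet ⊆ S'.toSet)
    (hint : interior S'.toSet ∩ interior T.toSet = ∅)
    (hnew : S.toSet ∩ T.toSet = ∅ → S'.toSet ∩ T.toSet = ∅) : IsSCRPair G u v S' T :=
  ⟨fun _ => hint, fun hadj => (h.2.1 hadj).mono (inter_subset_inter_left _ hsub),
    fun hne hna => hnew (h.2.2 hne hna)⟩

end IsSCRPair

theorem SimpleGraph.sup_edge_adj_iff_of_ne {V : Type} {H : SimpleGraph V} {s t u v : V}
    (hs : v ≠ s) (ht : v ≠ t) : (H ⊔ SimpleGraph.edge s t).Adj u v ↔ H.Adj u v := by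
  simp only [SimpleGraph.sup_adj, SimpleGraph.edge_adj, hs, ht, and_false, or_false, false_and]

namespace IsRectangularDrawing

variable {V : Type} {H : SimpleGraph V} {A : Set V} {s t : V} {Sq : V → AxSquare}
  (h : IsRectangularDrawing H A s t Sq)
include h

theorem source_ne_target : s ≠ t := by
  rintro rfl
  linarith [h.2.1, (Sq s).left_lt_right]

def targetSquare : AxSquare :=
  (Sq t).growBottomLeft ((Sq t).bottom - (Sq s).top) (sub_nonneg.2 h.2.2.1)

def sourceSquare : AxSquare :=
  (Sq s).growBottomLeft ((Sq s).left - h.targetSquare.left) <| by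
    simp only [targetSquare, AxSquare.left_growBottomLeft]
    linarith [h.2.1, h.2.2.1, (Sq t).left_lt_right]

open Classical in
noncomputable def joinedSquares : V → AxSquare :=
  fun v => if v = t then h.targetSquare else if v = s then h.sourceSquare else Sq v

theorem targetSquare_right : h.targetSquare.right = (Sq t).right := by simp [targetSquare]

theorem targetSquare_bottom : h.targetSquare.bottom = (Sq s).top := by simp [targetSquare]

theorem sourceSquare_left : h.sourceSquare.left = h.targetSquare.left := by simp [sourceSquare]

theorem sourceSquare_right : h.sourceSquare.right = (Sq s).right := by simp [sourceSquare]

theorem sourceSquare_top : h.sourceSquare.top = (Sq s).top := by simp [sourceSquare]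

theorem joinedSquares_target : h.joinedSquares t = h.targetSquare := by simp [joinedSquares]

theorem joinedSquares_source : h.joinedSquares s = h.sourceSquare := by
  simp [joinedSquares, h.source_ne_target]

theorem joinedSquares_of_ne {v : V} (hs : v ≠ s) (ht : v ≠ t) : h.joinedSquares v = Sq v := by
  simp [joinedSquares, hs, ht]

theorem sourceSquare_inter_targetSquare_infinite :
    (h.sourceSquare.toSet ∩ h.targetSquare.toSet).Infinite := by
  refine AxSquare.inter_infinite_of_top_eq_bottom (by rw [sourceSquare_top, targetSquare_bottom])
    (by rw [sourceSquare_left]; exact h.targetSquare.left_lt_right) ?_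
  calc h.targetSquare.left < h.targetSquare.right := h.targetSquare.left_lt_right
    _ = (Sq t).right := h.targetSquare_right
    _ ≤ (Sq s).left := h.2.1
    _ < h.sourceSquare.right := h.sourceSquare_right ▸ (Sq s).left_lt_right

theorem isSCRPair_targetSquare_sourceSquare :
    IsSCRPair (H ⊔ SimpleGraph.edge s t) t s h.targetSquare h.sourceSquare := by
  refine ⟨fun _ => ?_, fun _ => ?_, fun _ hna => (hna ?_).elim⟩
  · rw [inter_comm]
    exact AxSquare.interior_inter_eq_empty_of_top_le
      (by rw [sourceSquare_top, targetSquare_bottom])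
  · rw [inter_comm]
    exact h.sourceSquare_inter_targetSquare_infinite
  · simp [SimpleGraph.edge_adj, h.source_ne_target.symm]

theorem isSCRPair_targetSquare {v : V} (ht_mem : t ∈ A) (hv : v ∈ A) (hs : v ≠ s) (ht : v ≠ t) :
    IsSCRPair (H ⊔ SimpleGraph.edge s t) t v h.targetSquare (Sq v) := by
  have hv_int : v ∈ A \ ({s, t} : Set V) := ⟨hv, by simp [hs, ht]⟩
  have hleft : h.targetSquare.right ≤ (Sq v).left := h.targetSquare_right ▸ (h.2.2.2.1 v hv_int).1
  refine (((isSCROn_iff_forall_isSCRPair.1 h.1) t ht_mem v hv).of_adj_iff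
    (SimpleGraph.sup_edge_adj_iff_of_ne hs ht)).of_subset
    (AxSquare.toSet_subset_growBottomLeft _ _)
    (AxSquare.interior_inter_eq_empty_of_right_le hleft) fun hempty => ?_
  refine AxSquare.inter_eq_empty_of_right_lt (hleft.lt_of_ne fun heq => ?_)
  have htouch := h.2.2.2.2.1 v hv_int (heq.symm.trans h.targetSquare_right)
  rw [inter_comm, hempty] at htouch
  exact htouch finite_empty

theorem isSCRPair_sourceSquare {v : V} (hs_mem : s ∈ A) (hv : v ∈ A) (hs : v ≠ s) (ht : v ≠ t) :
    IsSCRPair (H ⊔ SimpleGraph.edge s t) s v h.sourceSquare (Sq v) := by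
  have hv_int : v ∈ A \ ({s, t} : Set V) := ⟨hv, by simp [hs, ht]⟩
  have hbelow : h.sourceSquare.top ≤ (Sq v).bottom := h.sourceSquare_top ▸ (h.2.2.2.1 v hv_int).2
  refine (((isSCROn_iff_forall_isSCRPair.1 h.1) s hs_mem v hv).of_adj_iff
    (SimpleGraph.sup_edge_adj_iff_of_ne hs ht)).of_subset
    (AxSquare.toSet_subset_growBottomLeft _ _)
    (AxSquare.interior_inter_eq_empty_of_top_le hbelow) fun hempty => ?_
  refine AxSquare.inter_eq_empty_of_top_lt (hbelow.lt_of_ne fun heq => ?_)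
  have htouch := h.2.2.2.2.2 v hv_int (heq.symm.trans h.sourceSquare_top)
  rw [inter_comm, hempty] at htouch
  exact htouch finite_empty

theorem isSCRPair_joinedSquares_target {v : V} (ht_mem : t ∈ A) (hv : v ∈ A) :
    IsSCRPair (H ⊔ SimpleGraph.edge s t) t v (h.joinedSquares t) (h.joinedSquares v) := by
  rw [h.joinedSquares_target]
  by_cases ht : v = t
  · rw [ht]
    exact isSCRPair_self _ _ _ _
  by_cases hs : v = s
  · rw [hs, h.joinedSquares_source]
    exact h.isSCRPair_targetSquare_sourceSquare
  rw [h.joinedSquares_of_ne hs ht]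
  exact h.isSCRPair_targetSquare ht_mem hv hs ht

theorem isSCRPair_joinedSquares_source {v : V} (hs_mem : s ∈ A) (hv : v ∈ A) (ht : v ≠ t) :
    IsSCRPair (H ⊔ SimpleGraph.edge s t) s v (h.joinedSquares s) (h.joinedSquares v) := by
  rw [h.joinedSquares_source]
  by_cases hs : v = s
  · rw [hs]
    exact isSCRPair_self _ _ _ _
  rw [h.joinedSquares_of_ne hs ht]
  exact h.isSCRPair_sourceSquare hs_mem hv hs ht

theorem isSCROn_joinedSquares : IsSCROn (H ⊔ SimpleGraph.edge s t) A h.joinedSquares := by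
  refine isSCROn_iff_forall_isSCRPair.2 fun u hu v hv => ?_
  by_cases hut : u = t
  · rw [hut] at hu ⊢
    exact h.isSCRPair_joinedSquares_target hu hv
  by_cases hvt : v = t
  · rw [hvt] at hv ⊢
    exact (h.isSCRPair_joinedSquares_target hv hu).symm
  by_cases hus : u = s
  · rw [hus] at hu ⊢
    exact h.isSCRPair_joinedSquares_source hu hv hvt
  by_cases hvs : v = s
  · rw [hvs] at hv ⊢
    exact (h.isSCRPair_joinedSquares_source hv hu hut).symm
  rw [h.joinedSquares_of_ne hus hut, h.joinedSquares_of_ne hvs hvt]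
  exact ((isSCROn_iff_forall_isSCRPair.1 h.1) u hu v hv).of_adj_iff
    (SimpleGraph.sup_edge_adj_iff_of_ne hvs hvt)

end IsRectangularDrawing

/-- let `H` be a finite two-terminal series-parallel graph with
source `s` and target `t`, with `s` and `t` non-adjacent in `H`.  If `H` admits an
L-shape drawing or a rectangular drawing, then the graph obtained from `H` by adding
the edge `st` admits a proper square-contact representation. -/
theorem ttsp_valid_drawing_add_edge_hasSCR {V : Type} [Fintype V]
    (H : SimpleGraph V) (A : Set V) (s t : V)
    (hT : IsTTSPWith H A s t) (hnadj : ¬ H.Adj s t)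
    (hdraw : (∃ Sq : V → AxSquare, IsLShapeDrawing H A s t Sq) ∨
             (∃ Sq : V → AxSquare, IsRectangularDrawing H A s t Sq)) :
    ∃ Sq : V → AxSquare,
      IsSCROn (H ⊔ SimpleGraph.fromEdgeSet {s(s, t)}) A Sq := by
  obtain ⟨Sq, hrect⟩ : ∃ Sq : V → AxSquare, IsRectangularDrawing H A s t Sq := by
    rcases hdraw with ⟨Sq, hL⟩ | hR
    · exact ⟨Sq, hL.1⟩
    · exact hR
  exact ⟨hrect.joinedSquares, hrect.isSCROn_joinedSquares⟩
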